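/- Let E be an equivalence relation on a Polish space X, and let R be an equivalence relation on a Polish space Z such that the relation of ℓ¹-equivalence on (0,1)^ℕ is generically R-ergodic. Suppose there is a Baire measurable function f : (0,1)^ℕ → X such that (i) f(s) E f(t) for all s, t ∈ (0,1)^ℕ with ∑_n |s_n − t_n| < ∞, and (ii) every comeager subset of (0,1)^ℕ contains elements s, t with f(s) not E-equivalent to f(t). Then E is not Borel reducible to R. -/

import Mathlib

/-!
Composing with a Borel reduction `g` of `E` to `R` turns `f` into a Baire measurable homomorphism
`g ∘ f` from ℓ¹-equivalence to `R`. Generic ergodicity makes `g ∘ f` map a comeager set into a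
single `R`-class, and since `g` reflects `R` back to `E`, `f` would map that comeager set into a
single `E`-class, contradicting (ii).
-/

open Filter Topology

/-- A function is Baire measurable if the preimage of every open set is Baire measurable. -/
def BaireMeasurableFun {X Y : Type*} [TopologicalSpace X] [TopologicalSpace Y]
    (f : X → Y) : Prop :=
  ∀ U : Set Y, IsOpen U → BaireMeasurableSet (f ⁻¹' U)

/-- `E` is generically `R`-ergodic. -/
def GenericallyErgodic {X Z : Type*} [TopologicalSpace X] [TopologicalSpace Z]
    (E : X → X → Prop) (R : Z → Z → Prop) : Prop :=
  ∀ g : X → Z, BaireMeasurableFun g → (∀ x y, E x y → R (g x) (g y)) →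
    ∃ C ∈ residual X, ∀ x ∈ C, ∀ y ∈ C, R (g x) (g y)

/-- `E` is Borel reducible to `R`. -/
def BorelReducible {X Z : Type*} [TopologicalSpace X] [TopologicalSpace Z]
    (E : X → X → Prop) (R : Z → Z → Prop) : Prop :=
  ∃ g : X → Z, @Measurable X Z (borel X) (borel Z) g ∧ ∀ x y, E x y ↔ R (g x) (g y)

/-- ℓ¹-equivalence of sequences in `(0,1)^ℕ`. -/
def l1Equiv (s t : ℕ → Set.Ioo (0 : ℝ) 1) : Prop :=
  Summable fun n => |(s n : ℝ) - (t n : ℝ)|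

section BaireMeasurableFun

variable {X Y Z : Type*} [TopologicalSpace X] [TopologicalSpace Y] [TopologicalSpace Z]

theorem BaireMeasurableFun.measurable {f : X → Y} (hf : BaireMeasurableFun f) :
    @Measurable X Y (eventuallyMeasurableSpace (borel X) (residual X)) (borel Y) f :=
  @measurable_generateFrom _ _ (_) _ _ hf

theorem BaireMeasurableFun.comp_borelMeasurable {f : X → Y} {g : Y → Z}
    (hg : @Measurable Y Z (borel Y) (borel Z) g) (hf : BaireMeasurableFun f) :
    BaireMeasurableFun (g ∘ f) := fun _ hU =>
  (@Measurable.comp _ _ _ (_) (borel Y) (borel Z) _ _ hg hf.measurable)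
    (MeasurableSpace.measurableSet_generateFrom hU)

end BaireMeasurableFun

theorem BorelReducible.exists_residual_of_genericallyErgodic
    {W X Z : Type*} [TopologicalSpace W] [TopologicalSpace X] [TopologicalSpace Z]
    {F : W → W → Prop} {E : X → X → Prop} {R : Z → Z → Prop}
    (hred : BorelReducible E R) (herg : GenericallyErgodic F R)
    {f : W → X} (hf : BaireMeasurableFun f) (hhom : ∀ s t, F s t → E (f s) (f t)) :
    ∃ C ∈ residual W, ∀ s ∈ C, ∀ t ∈ C, E (f s) (f t) := by
  obtain ⟨g, hg, hgE⟩ := hred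
  obtain ⟨C, hC, hCR⟩ := herg (g ∘ f) (hf.comp_borelMeasurable hg)
    fun s t hst => (hgE _ _).mp (hhom s t hst)
  exact ⟨C, hC, fun s hs t ht => (hgE _ _).mpr (hCR s hs t ht)⟩

theorem stmt4_general {X Z : Type*}
    [TopologicalSpace X] [TopologicalSpace Z]
    (E : X → X → Prop) (R : Z → Z → Prop)
    (hRerg : GenericallyErgodic l1Equiv R)
    (f : (ℕ → Set.Ioo (0 : ℝ) 1) → X) (hf : BaireMeasurableFun f)
    (h1 : ∀ s t, l1Equiv s t → E (f s) (f t))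
    (h2 : ∀ C ∈ residual (ℕ → Set.Ioo (0 : ℝ) 1), ∃ s ∈ C, ∃ t ∈ C, ¬ E (f s) (f t)) :
    ¬ BorelReducible E R := by
  intro hred
  obtain ⟨C, hC, hCE⟩ := hred.exists_residual_of_genericallyErgodic hRerg hf h1
  obtain ⟨s, hs, t, ht, hst⟩ := h2 C hC
  exact hst (hCE s hs t ht)

theorem stmt4 {X Z : Type*}
    [TopologicalSpace X] [PolishSpace X] [TopologicalSpace Z] [PolishSpace Z]
    (E : X → X → Prop) (R : Z → Z → Prop)
    (hE : Equivalence E) (hR : Equivalence R)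
    (hRerg : GenericallyErgodic l1Equiv R)
    (f : (ℕ → Set.Ioo (0 : ℝ) 1) → X) (hf : BaireMeasurableFun f)
    (h1 : ∀ s t, l1Equiv s t → E (f s) (f t))
    (h2 : ∀ C ∈ residual (ℕ → Set.Ioo (0 : ℝ) 1), ∃ s ∈ C, ∃ t ∈ C, ¬ E (f s) (f t)) :
    ¬ BorelReducible E R :=
  stmt4_general E R hRerg f hf h1 h2
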